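/- (Proposition 2: the group-j conditional update is an assignment problem.) Under the setup of the profiled single-group DM objective, max over feasible B ∈ {0,1}^{(L+K)×K} of sup_{θ ∈ S^{L+K}} G(B, θ) equals τ₁ Σ_{i=1}^{L} ‖s_i‖ + max over feasible B of Σ_{i,k} B_{ik} C_{ik}. In particular, if B* maximizes the assignment objective Σ_{i,k} B_{ik} C_{ik} over feasible matrices (e.g. the output of the Hungarian algorithm), and θ* ∈ S^{L+K} is defined by θ*_i = (Σ_k B*_{ik} v_k + s_i)/‖Σ_k B*_{ik} v_k + s_i‖ whenever Σ_k B*_{ik} v_k + s_i ≠ 0 (and θ*_i arbitrary in S otherwise), then G(B*, θ*) ≥ G(B, θ) for all feasible B and all θ ∈ S^{L+K}. -/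
import Mathlib


open RealInnerProductSpace

/-- `{0,1}`-valued indicator of a boolean entry of an assignment matrix. -/
def ind (b : Bool) : ℝ := if b then 1 else 0

/-- A binary matrix `B` (rows indexed by `I`, columns by `K'`) is feasible if each
column has exactly one `1` and each row has at most one `1`. -/
def Feasible {I K' : Type*} (B : I → K' → Bool) : Prop :=
  (∀ k, ∃! i, B i k = true) ∧
  (∀ i k₁ k₂, B i k₁ = true → B i k₂ = true → k₁ = k₂)

/-- The single-group DM objective `G(B, θ)` of Proposition 2: rows `Sum.inl i` are
the `L` existing global topics (with aggregated matched vectors `s i` from the other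
groups), rows `Sum.inr i'` are the potential `K` new topics (row `i = L + i' + 1`,
so `i - L = i' + 1`), which carry `s = 0`. -/
noncomputable def DMG {E : Type*} [NormedAddCommGroup E] [InnerProductSpace ℝ E]
    {L K : ℕ} (τ₁ γ₀ J : ℝ) (m : Fin L → ℝ) (s : Fin L → E) (v : Fin K → E)
    (B : Fin L ⊕ Fin K → Fin K → Bool) (θ : Fin L ⊕ Fin K → E) : ℝ :=
  τ₁ * (∑ i : Fin L ⊕ Fin K,
      ⟪θ i, (∑ k, ind (B i k) • v k) + Sum.elim s (fun _ => (0 : E)) i⟫) +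
  (∑ i : Fin L, ∑ k, ind (B (Sum.inl i) k) * Real.log (m i / (J - m i))) +
  (∑ i' : Fin K, ∑ k, ind (B (Sum.inr i') k) *
      (Real.log (γ₀ / J) - Real.log ((i' : ℕ) + 1)))

/-- The matching cost `C_{ik}` of Proposition 2 (for a fixed group `j`). -/
noncomputable def DMcost {E : Type*} [NormedAddCommGroup E] [InnerProductSpace ℝ E]
    {L K : ℕ} (τ₁ γ₀ J : ℝ) (m : Fin L → ℝ) (s : Fin L → E) (v : Fin K → E) :
    Fin L ⊕ Fin K → Fin K → ℝ
  | Sum.inl i, k => τ₁ * ‖v k + s i‖ - τ₁ * ‖s i‖ + Real.log (m i / (J - m i))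
  | Sum.inr i', _ => τ₁ + Real.log (γ₀ / J) - Real.log ((i' : ℕ) + 1)

/-- The assignment (Hungarian) objective `Σ_{i,k} B_{ik} C_{ik}`. -/
noncomputable def DMassign {E : Type*} [NormedAddCommGroup E] [InnerProductSpace ℝ E]
    {L K : ℕ} (τ₁ γ₀ J : ℝ) (m : Fin L → ℝ) (s : Fin L → E) (v : Fin K → E)
    (B : Fin L ⊕ Fin K → Fin K → Bool) : ℝ :=
  ∑ i, ∑ k, ind (B i k) * DMcost τ₁ γ₀ J m s v i k


lemma row_cases {K' : ℕ} (b : Fin K' → Bool)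
    (hb : ∀ k₁ k₂, b k₁ = true → b k₂ = true → k₁ = k₂) :
    (∀ k, b k = false) ∨ ∃ k₀, b k₀ = true ∧ ∀ k, k ≠ k₀ → b k = false := by
  by_cases h : ∃ k, b k = true
  · obtain ⟨k₀, hk₀⟩ := h
    refine Or.inr ⟨k₀, hk₀, fun k hk => ?_⟩
    by_contra hc
    exact hk (hb k k₀ (by simpa using hc) hk₀)
  · push_neg at h
    exact Or.inl fun k => by simpa using h k

lemma row_eq {E : Type*} [NormedAddCommGroup E] [InnerProductSpace ℝ E]
    {K' : ℕ} (τ₁ r : ℝ) (s0 : E) (b : Fin K' → Bool) (v : Fin K' → E)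
    (hb : ∀ k₁ k₂, b k₁ = true → b k₂ = true → k₁ = k₂) :
    τ₁ * ‖(∑ k, ind (b k) • v k) + s0‖ + ∑ k, ind (b k) * r =
    τ₁ * ‖s0‖ + ∑ k, ind (b k) * (τ₁ * ‖v k + s0‖ - τ₁ * ‖s0‖ + r) := by
  rcases row_cases b hb with h | ⟨k₀, hk₀, hrest⟩
  · simp [ind, h]
  · rw [Finset.sum_eq_single k₀ (fun k _ hk => by simp [ind, hrest k hk]) (by simp),
      Finset.sum_eq_single k₀ (fun k _ hk => by simp [ind, hrest k hk]) (by simp),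
      Finset.sum_eq_single k₀ (fun k _ hk => by simp [ind, hrest k hk]) (by simp)]
    simp only [ind, hk₀, if_pos, one_smul, one_mul]
    ring

lemma H_eq {E : Type*} [NormedAddCommGroup E] [InnerProductSpace ℝ E]
    {L K : ℕ} (τ₁ γ₀ J : ℝ) (m : Fin L → ℝ) (s : Fin L → E) (v : Fin K → E)
    (hv : ∀ k, ‖v k‖ = 1)
    (B : Fin L ⊕ Fin K → Fin K → Bool) (hB : Feasible B) :
    τ₁ * (∑ i : Fin L ⊕ Fin K,
        ‖(∑ k, ind (B i k) • v k) + Sum.elim s (fun _ => (0 : E)) i‖) +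
      (∑ i : Fin L, ∑ k, ind (B (Sum.inl i) k) * Real.log (m i / (J - m i))) +
      (∑ i' : Fin K, ∑ k, ind (B (Sum.inr i') k) *
          (Real.log (γ₀ / J) - Real.log ((i' : ℕ) + 1))) =
    τ₁ * (∑ i : Fin L, ‖s i‖) + DMassign τ₁ γ₀ J m s v B := by
  have h1 : ∀ i : Fin L,
      τ₁ * ‖(∑ k, ind (B (Sum.inl i) k) • v k) + s i‖ +
        ∑ k, ind (B (Sum.inl i) k) * Real.log (m i / (J - m i)) =
      τ₁ * ‖s i‖ + ∑ k, ind (B (Sum.inl i) k) * DMcost τ₁ γ₀ J m s v (Sum.inl i) k :=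
    fun i => row_eq τ₁ _ (s i) _ v (hB.2 _)
  have h2 : ∀ i' : Fin K,
      τ₁ * ‖(∑ k, ind (B (Sum.inr i') k) • v k) + (0 : E)‖ +
        ∑ k, ind (B (Sum.inr i') k) * (Real.log (γ₀ / J) - Real.log ((i' : ℕ) + 1)) =
      ∑ k, ind (B (Sum.inr i') k) * DMcost τ₁ γ₀ J m s v (Sum.inr i') k := by
    intro i'
    rw [row_eq τ₁ (Real.log (γ₀ / J) - Real.log ((i' : ℕ) + 1)) (0 : E)
      (B (Sum.inr i')) v (hB.2 _)]
    simp only [norm_zero, mul_zero, zero_add, add_zero, hv, DMcost]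
    exact Finset.sum_congr rfl fun k _ => by ring
  calc
    τ₁ * (∑ i : Fin L ⊕ Fin K,
        ‖(∑ k, ind (B i k) • v k) + Sum.elim s (fun _ => (0 : E)) i‖) +
      (∑ i : Fin L, ∑ k, ind (B (Sum.inl i) k) * Real.log (m i / (J - m i))) +
      (∑ i' : Fin K, ∑ k, ind (B (Sum.inr i') k) *
          (Real.log (γ₀ / J) - Real.log ((i' : ℕ) + 1)))
      = (∑ i : Fin L, (τ₁ * ‖(∑ k, ind (B (Sum.inl i) k) • v k) + s i‖ +
            ∑ k, ind (B (Sum.inl i) k) * Real.log (m i / (J - m i)))) +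
        (∑ i' : Fin K, (τ₁ * ‖(∑ k, ind (B (Sum.inr i') k) • v k) + (0 : E)‖ +
            ∑ k, ind (B (Sum.inr i') k) *
              (Real.log (γ₀ / J) - Real.log ((i' : ℕ) + 1)))) := by
        rw [Fintype.sum_sum_type]
        simp only [Sum.elim_inl, Sum.elim_inr]
        rw [Finset.sum_add_distrib, Finset.sum_add_distrib, mul_add,
          Finset.mul_sum, Finset.mul_sum]
        ring
    _ = (∑ i : Fin L, (τ₁ * ‖s i‖ +
            ∑ k, ind (B (Sum.inl i) k) * DMcost τ₁ γ₀ J m s v (Sum.inl i) k)) +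
        (∑ i' : Fin K, ∑ k, ind (B (Sum.inr i') k) *
            DMcost τ₁ γ₀ J m s v (Sum.inr i') k) := by
        rw [Finset.sum_congr rfl fun i _ => h1 i, Finset.sum_congr rfl fun i' _ => h2 i']
    _ = τ₁ * (∑ i : Fin L, ‖s i‖) + DMassign τ₁ γ₀ J m s v B := by
        rw [DMassign, Fintype.sum_sum_type, Finset.sum_add_distrib, Finset.mul_sum]
        ring

/-- Proposition 2: the group-`j` conditional update is an assignment
problem: if `B*` maximizes the assignment objective over feasible matrices and
`θ*` is defined by normalizing `Σ_k B*_{ik} v_k + s_i` (arbitrary unit vector when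
that sum vanishes), then `(B*, θ*)` maximizes `G` over all feasible `B` and unit
`θ`, and the maximum value of `G` is `τ₁ Σ_i ‖s_i‖` plus the maximum of the
assignment objective. -/
theorem stmt12 {E : Type*} [NormedAddCommGroup E] [InnerProductSpace ℝ E]
    [FiniteDimensional ℝ E] (hdim : 1 ≤ Module.finrank ℝ E)
    (L K : ℕ) (hK : 1 ≤ K)
    (v : Fin K → E) (hv : ∀ k, ‖v k‖ = 1) (s : Fin L → E)
    (τ₁ γ₀ J : ℝ) (hτ₁ : 0 < τ₁) (hγ₀ : 0 < γ₀) (hJ : 0 < J)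
    (m : Fin L → ℝ) (hm : ∀ i, 0 < m i ∧ m i < J)
    (Bstar : Fin L ⊕ Fin K → Fin K → Bool) (hBstar : Feasible Bstar)
    (hmax : ∀ B : Fin L ⊕ Fin K → Fin K → Bool, Feasible B →
      DMassign τ₁ γ₀ J m s v B ≤ DMassign τ₁ γ₀ J m s v Bstar)
    (θstar : Fin L ⊕ Fin K → E)
    (hθ1 : ∀ i : Fin L ⊕ Fin K,
      (∑ k, ind (Bstar i k) • v k) + Sum.elim s (fun _ => (0 : E)) i ≠ 0 →
      θstar i =
        ‖(∑ k, ind (Bstar i k) • v k) + Sum.elim s (fun _ => (0 : E)) i‖⁻¹ •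
          ((∑ k, ind (Bstar i k) • v k) + Sum.elim s (fun _ => (0 : E)) i))
    (hθ2 : ∀ i, ‖θstar i‖ = 1) :
    DMG τ₁ γ₀ J m s v Bstar θstar =
      τ₁ * (∑ i : Fin L, ‖s i‖) + DMassign τ₁ γ₀ J m s v Bstar ∧
    ∀ (B : Fin L ⊕ Fin K → Fin K → Bool) (θ : Fin L ⊕ Fin K → E),
      Feasible B → (∀ i, ‖θ i‖ = 1) →
      DMG τ₁ γ₀ J m s v B θ ≤ DMG τ₁ γ₀ J m s v Bstar θstar := by
  have hwle : ∀ (B : Fin L ⊕ Fin K → Fin K → Bool) (θ : Fin L ⊕ Fin K → E),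
      Feasible B → (∀ i, ‖θ i‖ = 1) →
      DMG τ₁ γ₀ J m s v B θ ≤ τ₁ * (∑ i : Fin L, ‖s i‖) + DMassign τ₁ γ₀ J m s v B := by
    intro B θ hB hθ
    rw [← H_eq τ₁ γ₀ J m s v hv B hB]
    unfold DMG
    gcongr with i _
    calc ⟪θ i, (∑ k, ind (B i k) • v k) + Sum.elim s (fun _ => (0 : E)) i⟫
          ≤ ‖θ i‖ * ‖(∑ k, ind (B i k) • v k) + Sum.elim s (fun _ => (0 : E)) i‖ :=
            real_inner_le_norm _ _
        _ = _ := by rw [hθ i, one_mul]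
  have heq : DMG τ₁ γ₀ J m s v Bstar θstar =
      τ₁ * (∑ i : Fin L, ‖s i‖) + DMassign τ₁ γ₀ J m s v Bstar := by
    rw [← H_eq τ₁ γ₀ J m s v hv Bstar hBstar]
    unfold DMG
    congr 2
    refine congrArg (fun x => τ₁ * x) (Finset.sum_congr rfl fun i _ => ?_)
    by_cases hw : (∑ k, ind (Bstar i k) • v k) + Sum.elim s (fun _ => (0 : E)) i = 0
    · simp [hw]
    · rw [hθ1 i hw, real_inner_smul_left, real_inner_self_eq_norm_mul_norm]
      have hn : ‖(∑ k, ind (Bstar i k) • v k) + Sum.elim s (fun _ => (0 : E)) i‖ ≠ 0 :=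
        norm_ne_zero_iff.mpr hw
      field_simp
  refine ⟨heq, fun B θ hB hθ => ?_⟩
  calc DMG τ₁ γ₀ J m s v B θ
      ≤ τ₁ * (∑ i : Fin L, ‖s i‖) + DMassign τ₁ γ₀ J m s v B := hwle B θ hB hθ
    _ ≤ τ₁ * (∑ i : Fin L, ‖s i‖) + DMassign τ₁ γ₀ J m s v Bstar := by
        linarith [hmax B hB]
    _ = DMG τ₁ γ₀ J m s v Bstar θstar := heq.symm
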